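/- Let n ≥ 1 and T ⊆ [n] with 1 ∈ T. Then for every k ∈ {0,1,...,n}, p^T_{n,k}(x) = x · Σ_{i=0}^{k-1} p^{T-1}_{n-1,i}(x) + Σ_{i=k}^{n-1} p^{T-1}_{n-1,i}(x), where T-1 = {a-1 : a ∈ T}. -/
import Mathlib


open Polynomial

open scoped Classical

noncomputable section

/-- The descent set of a permutation `w` of `Fin n`, recorded as a subset of
`{1, ..., n-1}` (1-based positions, as in the paper: `i ∈ Des(w)` iff `w(i) > w(i+1)`). -/
def descSet {n : ℕ} (w : Equiv.Perm (Fin n)) : Finset ℕ :=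
  (Finset.univ.filter (fun i : Fin (n - 1) =>
      w ⟨i.val + 1, by have := i.isLt; omega⟩ < w ⟨i.val, by have := i.isLt; omega⟩)).image
    (fun i => i.val + 1)

/-- `A^T_n(x) = Σ_{w ∈ S_n, Des(w) ⊆ T} x^{des(w)}` (note `Des(w) ⊆ {1,...,n-1}`
automatically, so this also realizes the convention `A^T_n := A^{T ∩ [n-1]}_n`). -/
def Apoly (n : ℕ) (T : Finset ℕ) : Polynomial ℝ :=
  ∑ w ∈ Finset.univ.filter (fun w : Equiv.Perm (Fin n) => descSet w ⊆ T),
    X ^ (descSet w).card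

/-- `p^T_{n,k}(x) = Σ x^{des(w)}` over permutations `w ∈ S_{n+1}` with `w(1) = k+1`
(0-based: `w 0 = k`) and `Des(w) ⊆ T`. -/
def ppoly (n k : ℕ) (T : Finset ℕ) : Polynomial ℝ :=
  ∑ w ∈ Finset.univ.filter (fun w : Equiv.Perm (Fin (n + 1)) =>
      (w 0 : ℕ) = k ∧ descSet w ⊆ T),
    X ^ (descSet w).card

/-- A real polynomial has only real roots (or is identically zero). -/
def RealRooted (p : Polynomial ℝ) : Prop :=
  p = 0 ∨ ∀ z : ℂ, Polynomial.aeval z p = 0 → z.im = 0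

/-- The list of real roots of `p`, with multiplicity, in decreasing order. -/
def rootsDesc (p : Polynomial ℝ) : List ℝ :=
  (p.roots.sort (· ≤ ·)).reverse

/-- `Interlaces p q` means `p ⪯ q`: both are real-rooted and, listing the roots of `p`
as `α_1 ≥ α_2 ≥ ⋯` and those of `q` as `β_1 ≥ β_2 ≥ ⋯`, one has
`⋯ ≤ α_2 ≤ β_2 ≤ α_1 ≤ β_1`; by convention the zero polynomial interlaces and is
interlaced by every real-rooted polynomial. -/
def Interlaces (p q : Polynomial ℝ) : Prop :=
  (p = 0 ∧ RealRooted q) ∨ (q = 0 ∧ RealRooted p) ∨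
  (RealRooted p ∧ RealRooted q ∧
    Multiset.card q.roots ≤ Multiset.card p.roots + 1 ∧
    Multiset.card p.roots ≤ Multiset.card q.roots ∧
    (∀ (i : ℕ) (hp : i < (rootsDesc p).length) (hq : i < (rootsDesc q).length),
      (rootsDesc p).get ⟨i, hp⟩ ≤ (rootsDesc q).get ⟨i, hq⟩) ∧
    (∀ (i : ℕ) (hq : i + 1 < (rootsDesc q).length) (hp : i < (rootsDesc p).length),
      (rootsDesc q).get ⟨i + 1, hq⟩ ≤ (rootsDesc p).get ⟨i, hp⟩))

lemma mem_descSet {n : ℕ} (w : Equiv.Perm (Fin n)) (a : ℕ) :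
    a ∈ descSet w ↔ ∃ t : ℕ, ∃ ht : t + 1 < n, a = t + 1 ∧
      (w ⟨t + 1, ht⟩ : ℕ) < (w ⟨t, by omega⟩ : ℕ) := by
  simp only [descSet, Finset.mem_image, Finset.mem_filter, Finset.mem_univ, true_and]
  constructor
  · rintro ⟨i, hi, rfl⟩
    exact ⟨i.val, by have := i.isLt; omega, rfl, hi⟩
  · rintro ⟨t, ht, rfl, h⟩
    exact ⟨⟨t, by omega⟩, h, rfl⟩

def plift' (m k : ℕ) (hk : k < m + 2) (v : Equiv.Perm (Fin (m + 1))) :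
    Equiv.Perm (Fin (m + 2)) :=
  (Fin.cycleRange ⟨k, hk⟩)⁻¹ * Equiv.Perm.decomposeFin.symm (0, v)

lemma plift'_zero (m k : ℕ) (hk : k < m + 2) (v : Equiv.Perm (Fin (m + 1))) :
    plift' m k hk v 0 = ⟨k, hk⟩ := by
  simp only [plift', Equiv.Perm.mul_apply, Equiv.Perm.decomposeFin_symm_apply_zero,
    Equiv.Perm.inv_def, Fin.cycleRange_symm_zero]

lemma plift'_succ (m k : ℕ) (hk : k < m + 2) (v : Equiv.Perm (Fin (m + 1))) (j : Fin (m + 1)) :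
    plift' m k hk v j.succ = (⟨k, hk⟩ : Fin (m + 2)).succAbove (v j) := by
  simp only [plift', Equiv.Perm.mul_apply, Equiv.Perm.decomposeFin_symm_apply_succ,
    Equiv.Perm.inv_def, Equiv.swap_self, Equiv.refl_apply, Fin.cycleRange_symm_succ]

lemma plift'_def (m k : ℕ) (hk : k < m + 2) (v : Equiv.Perm (Fin (m + 1))) :
    plift' m k hk v
      = (Fin.cycleRange ⟨k, hk⟩)⁻¹ * Equiv.Perm.decomposeFin.symm (0, v) := rfl

attribute [irreducible] plift'

lemma plift'_val_zero (m k : ℕ) (hk : k < m + 2) (v : Equiv.Perm (Fin (m + 1)))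
    (h0 : 0 < m + 2) : (plift' m k hk v ⟨0, h0⟩ : ℕ) = k := by
  have h : (⟨0, h0⟩ : Fin (m + 2)) = 0 := rfl
  rw [h, plift'_zero]

lemma plift'_val_succ (m k : ℕ) (hk : k < m + 2) (v : Equiv.Perm (Fin (m + 1)))
    (t : ℕ) (ht1 : t + 1 < m + 2) (ht : t < m + 1) :
    (plift' m k hk v ⟨t + 1, ht1⟩ : ℕ) =
      if (v ⟨t, ht⟩ : ℕ) < k then (v ⟨t, ht⟩ : ℕ) else (v ⟨t, ht⟩ : ℕ) + 1 := by
  have h : (⟨t + 1, ht1⟩ : Fin (m + 2)) = (⟨t, ht⟩ : Fin (m + 1)).succ := rfl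
  rw [h, plift'_succ]
  rcases lt_or_ge ((v ⟨t, ht⟩ : ℕ)) k with hc | hc
  · rw [if_pos hc, Fin.succAbove_of_castSucc_lt _ _ (by simp [Fin.lt_def, hc])]
    simp
  · rw [if_neg (by omega), Fin.succAbove_of_le_castSucc _ _ (by simp [Fin.le_def]; omega)]
    simp

lemma mem_descSet_plift' {m k : ℕ} {hk : k < m + 2} {v : Equiv.Perm (Fin (m + 1))} {a : ℕ} :
    a ∈ descSet (plift' m k hk v) ↔
      (a = 1 ∧ (v 0 : ℕ) < k) ∨ ∃ b ∈ descSet v, a = b + 1 := by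
  rw [mem_descSet]
  constructor
  · rintro ⟨t, ht, rfl, h⟩
    rcases Nat.eq_zero_or_pos t with rfl | htpos
    · left
      refine ⟨rfl, ?_⟩
      rw [plift'_val_succ m k hk v 0 (by omega) (by omega),
        plift'_val_zero m k hk v (by omega)] at h
      have h00 : (⟨0, by omega⟩ : Fin (m + 1)) = 0 := rfl
      rw [h00] at h
      split_ifs at h with hc
      · exact hc
      · omega
    · right
      obtain ⟨s, rfl⟩ : ∃ s, t = s + 1 := ⟨t - 1, by omega⟩
      refine ⟨s + 1, ?_, rfl⟩
      rw [mem_descSet]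
      refine ⟨s, by omega, rfl, ?_⟩
      have hs1 : s < m + 1 := by omega
      have hs2 : s + 1 < m + 1 := by omega
      rw [plift'_val_succ m k hk v (s + 1) (by omega) hs2,
        plift'_val_succ m k hk v s (by omega) hs1] at h
      rcases Nat.lt_or_ge ((v ⟨s + 1, hs2⟩ : ℕ)) k with c1 | c1 <;>
        rcases Nat.lt_or_ge ((v ⟨s, hs1⟩ : ℕ)) k with c2 | c2
      · rw [if_pos c1, if_pos c2] at h; omega
      · rw [if_pos c1, if_neg (Nat.not_lt.mpr c2)] at h; omega
      · rw [if_neg (Nat.not_lt.mpr c1), if_pos c2] at h; omega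
      · rw [if_neg (Nat.not_lt.mpr c1), if_neg (Nat.not_lt.mpr c2)] at h; omega
  · rintro (⟨rfl, hlt⟩ | ⟨b, hb, rfl⟩)
    · refine ⟨0, by omega, rfl, ?_⟩
      rw [plift'_val_succ m k hk v 0 (by omega) (by omega),
        plift'_val_zero m k hk v (by omega)]
      have h00 : (⟨0, by omega⟩ : Fin (m + 1)) = 0 := rfl
      rw [h00]
      split_ifs <;> omega
    · rw [mem_descSet] at hb
      obtain ⟨s, hs, rfl, h⟩ := hb
      have h' : (v ⟨s + 1, by omega⟩ : ℕ) < (v ⟨s, by omega⟩ : ℕ) := h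
      refine ⟨s + 1, by omega, rfl, ?_⟩
      rw [plift'_val_succ m k hk v (s + 1) (by omega) (by omega),
        plift'_val_succ m k hk v s (by omega) (by omega)]
      split_ifs <;> omega

lemma one_le_of_mem_descSet {n : ℕ} {v : Equiv.Perm (Fin n)} {b : ℕ} (hb : b ∈ descSet v) :
    1 ≤ b := by
  rw [mem_descSet] at hb
  obtain ⟨t, _, rfl, _⟩ := hb
  omega

lemma card_descSet_plift' (m k : ℕ) (hk : k < m + 2) (v : Equiv.Perm (Fin (m + 1))) :
    (descSet (plift' m k hk v)).card
      = (descSet v).card + if (v 0 : ℕ) < k then 1 else 0 := by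
  have hset : descSet (plift' m k hk v)
      = ((descSet v).image (· + 1)) ∪ (if (v 0 : ℕ) < k then {1} else ∅) := by
    ext a
    rw [mem_descSet_plift']
    rcases Nat.lt_or_ge ((v 0 : ℕ)) k with hc | hc
    · rw [if_pos hc]
      simp only [Finset.mem_union, Finset.mem_image, Finset.mem_singleton]
      constructor
      · rintro (⟨rfl, -⟩ | ⟨b, hb, rfl⟩)
        · exact Or.inr rfl
        · exact Or.inl ⟨b, hb, rfl⟩
      · rintro (⟨b, hb, rfl⟩ | rfl)
        · exact Or.inr ⟨b, hb, rfl⟩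
        · exact Or.inl ⟨rfl, hc⟩
    · rw [if_neg (Nat.not_lt.mpr hc)]
      rw [Finset.union_empty]
      simp only [Finset.mem_image]
      constructor
      · rintro (⟨rfl, hcc⟩ | ⟨b, hb, rfl⟩)
        · exact absurd hcc (Nat.not_lt.mpr hc)
        · exact ⟨b, hb, rfl⟩
      · rintro ⟨b, hb, rfl⟩
        exact Or.inr ⟨b, hb, rfl⟩
  rw [hset]
  have hinj : Set.InjOn (· + 1) (descSet v) := fun x _ y _ h => by simpa using h
  by_cases hc : (v 0 : ℕ) < k
  · rw [if_pos hc, if_pos hc]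
    rw [Finset.card_union_of_disjoint, Finset.card_image_of_injOn hinj,
      Finset.card_singleton]
    rw [Finset.disjoint_singleton_right]
    simp only [Finset.mem_image]
    rintro ⟨b, hb, hb1⟩
    have := one_le_of_mem_descSet hb
    omega
  · rw [if_neg hc, if_neg hc, Finset.union_empty, Finset.card_image_of_injOn hinj]
    omega

lemma descSet_plift'_subset_iff (m k : ℕ) (hk : k < m + 2) (v : Equiv.Perm (Fin (m + 1)))
    (T : Finset ℕ) (hT : T ⊆ Finset.Icc 1 (m + 1)) (h1T : 1 ∈ T) :
    descSet (plift' m k hk v) ⊆ T ↔ descSet v ⊆ T.image (fun a => a - 1) := by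
  constructor
  · intro h b hb
    have hbT : b + 1 ∈ T := h (mem_descSet_plift'.mpr (Or.inr ⟨b, hb, rfl⟩))
    exact Finset.mem_image.mpr ⟨b + 1, hbT, rfl⟩
  · intro h a ha
    rcases mem_descSet_plift'.mp ha with ⟨rfl, -⟩ | ⟨b, hb, rfl⟩
    · exact h1T
    · obtain ⟨t, htT, ht⟩ := Finset.mem_image.mp (h hb)
      have h1 := Finset.mem_Icc.mp (hT htT)
      have : t = b + 1 := by omega
      rwa [← this]

lemma decomposeFin_fst {n : ℕ} (u : Equiv.Perm (Fin (n + 1))) :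
    (Equiv.Perm.decomposeFin u).1 = u 0 := by
  have h := Equiv.Perm.decomposeFin_symm_apply_zero
    (Equiv.Perm.decomposeFin u).1 (Equiv.Perm.decomposeFin u).2
  rw [Prod.mk.eta, Equiv.symm_apply_apply] at h
  exact h.symm

lemma plift'_retract (m k : ℕ) (hk : k < m + 2) (v : Equiv.Perm (Fin (m + 1))) :
    (Equiv.Perm.decomposeFin
      ((Fin.cycleRange (⟨k, hk⟩ : Fin (m + 2))) * plift' m k hk v)).2 = v := by
  rw [plift'_def, ← mul_assoc, mul_inv_cancel, one_mul, Equiv.apply_symm_apply]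

lemma plift'_section (m k : ℕ) (hk : k < m + 2) (w : Equiv.Perm (Fin (m + 2)))
    (hw : w 0 = ⟨k, hk⟩) :
    plift' m k hk
      ((Equiv.Perm.decomposeFin ((Fin.cycleRange (⟨k, hk⟩ : Fin (m + 2))) * w)).2) = w := by
  have hfst : (Equiv.Perm.decomposeFin ((Fin.cycleRange (⟨k, hk⟩ : Fin (m + 2))) * w)).1
      = 0 := by
    rw [decomposeFin_fst, Equiv.Perm.mul_apply, hw, Fin.cycleRange_self]
  have hpair : Equiv.Perm.decomposeFin.symm
      (0, (Equiv.Perm.decomposeFin ((Fin.cycleRange (⟨k, hk⟩ : Fin (m + 2))) * w)).2)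
      = (Fin.cycleRange (⟨k, hk⟩ : Fin (m + 2))) * w := by
    rw [← hfst, Prod.mk.eta, Equiv.symm_apply_apply]
  rw [plift'_def, hpair, inv_mul_cancel_left]

/-- Let `n ≥ 1` and `T ⊆ [n]` with `1 ∈ T`. Then for every
`k ∈ {0,1,…,n}`,
`p^T_{n,k}(x) = x·Σ_{i=0}^{k-1} p^{T-1}_{n-1,i}(x) + Σ_{i=k}^{n-1} p^{T-1}_{n-1,i}(x)`. -/
theorem stmt4 (n : ℕ) (hn : 1 ≤ n) (T : Finset ℕ) (hT : T ⊆ Finset.Icc 1 n)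
    (h1T : 1 ∈ T) (k : ℕ) (hk : k ≤ n) :
    ppoly n k T =
      X * (∑ i ∈ Finset.range k, ppoly (n - 1) i (T.image (fun a => a - 1))) +
        ∑ i ∈ Finset.Ico k n, ppoly (n - 1) i (T.image (fun a => a - 1)) := by
  obtain ⟨m, rfl⟩ : ∃ m, n = m + 1 := ⟨n - 1, by omega⟩
  simp only [Nat.add_sub_cancel]
  have hk2 : k < m + 2 := by omega
  set T' := T.image (fun a => a - 1) with hT'def
  set B := Finset.univ.filter (fun v : Equiv.Perm (Fin (m + 1)) => descSet v ⊆ T') with hB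
  -- Step 1: LHS
  have key : ppoly (m + 1) k T =
      ∑ v ∈ B, X ^ ((descSet v).card + if (v 0 : ℕ) < k then 1 else 0) := by
    rw [ppoly]
    refine Finset.sum_nbij'
      (fun w => (Equiv.Perm.decomposeFin ((Fin.cycleRange (⟨k, hk2⟩ : Fin (m + 2))) * w)).2)
      (plift' m k hk2) ?_ ?_ ?_ ?_ ?_
    · intro w hw
      simp only [Finset.mem_filter, Finset.mem_univ, true_and] at hw
      obtain ⟨hw0, hwT⟩ := hw
      have hw0' : w 0 = ⟨k, hk2⟩ := Fin.ext hw0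
      rw [hB]
      simp only [Finset.mem_filter, Finset.mem_univ, true_and, hT'def]
      rw [← descSet_plift'_subset_iff m k hk2 _ T hT h1T, plift'_section m k hk2 w hw0']
      exact hwT
    · intro v hv
      rw [hB] at hv
      simp only [Finset.mem_filter, Finset.mem_univ, true_and, hT'def] at hv
      simp only [Finset.mem_filter, Finset.mem_univ, true_and]
      constructor
      · rw [plift'_zero]
      · rw [descSet_plift'_subset_iff m k hk2 v T hT h1T]
        exact hv
    · intro w hw
      simp only [Finset.mem_filter, Finset.mem_univ, true_and] at hw
      exact plift'_section m k hk2 w (Fin.ext hw.1)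
    · intro v _
      exact plift'_retract m k hk2 v
    · intro w hw
      simp only [Finset.mem_filter, Finset.mem_univ, true_and] at hw
      congr 1
      conv_lhs => rw [← plift'_section m k hk2 w (Fin.ext hw.1)]
      rw [card_descSet_plift']
  rw [key]
  -- Step 2: RHS
  have claim : ∀ i : ℕ, ppoly m i T'
      = ∑ v ∈ B.filter (fun v => (v 0 : ℕ) = i), X ^ (descSet v).card := by
    intro i
    rw [ppoly, hB, Finset.filter_filter]
    apply Finset.sum_congr _ (fun _ _ => rfl)
    apply Finset.filter_congr
    intro v _
    exact and_comm
  have hsplit : ∀ i : ℕ,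
      (if i < k then X * ppoly m i T' else ppoly m i T')
      = ∑ v ∈ B.filter (fun v => (v 0 : ℕ) = i),
          X ^ ((descSet v).card + if (v 0 : ℕ) < k then 1 else 0) := by
    intro i
    rcases Nat.lt_or_ge i k with hik | hik
    · rw [if_pos hik, claim, Finset.mul_sum]
      apply Finset.sum_congr rfl
      intro v hv
      simp only [Finset.mem_filter] at hv
      rw [hv.2, if_pos hik, pow_succ, mul_comm]
    · rw [if_neg (Nat.not_lt.mpr hik), claim]
      apply Finset.sum_congr rfl
      intro v hv
      simp only [Finset.mem_filter] at hv
      rw [hv.2, if_neg (Nat.not_lt.mpr hik)]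
      norm_num
  have h1 : X * (∑ i ∈ Finset.range k, ppoly m i T')
      = ∑ i ∈ Finset.range k, (if i < k then X * ppoly m i T' else ppoly m i T') := by
    rw [Finset.mul_sum]
    apply Finset.sum_congr rfl
    intro i hi
    rw [if_pos (Finset.mem_range.mp hi)]
  have h2 : (∑ i ∈ Finset.Ico k (m + 1), ppoly m i T')
      = ∑ i ∈ Finset.Ico k (m + 1), (if i < k then X * ppoly m i T' else ppoly m i T') := by
    apply Finset.sum_congr rfl
    intro i hi
    rw [if_neg (Nat.not_lt.mpr (Finset.mem_Ico.mp hi).1)]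
  rw [h1, h2, Finset.sum_range_add_sum_Ico _ hk]
  have h3 : ∑ j ∈ Finset.range (m + 1), ∑ v ∈ B.filter (fun v => (v 0 : ℕ) = j),
        (X : Polynomial ℝ) ^ ((descSet v).card + if (v 0 : ℕ) < k then 1 else 0)
      = ∑ v ∈ B, (X : Polynomial ℝ) ^ ((descSet v).card + if (v 0 : ℕ) < k then 1 else 0) :=
    Finset.sum_fiberwise_of_maps_to (fun v _ => Finset.mem_range.mpr (v 0).isLt) _
  rw [← h3]
  apply Finset.sum_congr rfl
  intro i _
  rw [hsplit i]
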